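/- arXiv:2602.11623 — 2 statements merged into one kernel-verified Lean document; each statement's English description precedes it below -/
import Mathlib

section
/- The Shapley value of a cooperative game U : 2^[N] → ℝ equals the integral over t ∈ [0,1] of the gradient of the multilinear extension of U evaluated at the point t·1_N; that is, for every i ∈ [N], φ_i^Shap(U) = ∫_0^1 Σ_{S ⊆ [N]\{i}} t^{|S|}(1−t)^{N−1−|S|}[U(S∪{i}) − U(S)] dt. -/
open Finset

lemma beta_nat (s n : ℕ) :
    ∫ t in (0:ℝ)..1, t ^ s * (1 - t) ^ n
      = (s.factorial * n.factorial : ℝ) / (s + n + 1).factorial := by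
  induction n generalizing s with
  | zero =>
      simp only [pow_zero, mul_one]
      rw [integral_pow, Nat.add_zero, Nat.factorial_succ, Nat.factorial_zero]
      rw [zero_pow (Nat.succ_ne_zero s), one_pow]
      have hpos : (0:ℝ) < (s.factorial : ℝ) := by positivity
      push_cast
      field_simp
      norm_num
  | succ n ih =>
      have hsplit : ∀ t : ℝ, t ^ s * (1 - t) ^ (n + 1)
          = t ^ s * (1 - t) ^ n - t ^ (s + 1) * (1 - t) ^ n := by
        intro t; ring
      have h1 : IntervalIntegrable (fun t : ℝ => t ^ s * (1 - t) ^ n)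
          MeasureTheory.volume 0 1 := (by fun_prop : Continuous fun t : ℝ => t ^ s * (1 - t) ^ n).intervalIntegrable 0 1
      have h2 : IntervalIntegrable (fun t : ℝ => t ^ (s + 1) * (1 - t) ^ n)
          MeasureTheory.volume 0 1 := (by fun_prop : Continuous fun t : ℝ => t ^ (s + 1) * (1 - t) ^ n).intervalIntegrable 0 1
      calc ∫ t in (0:ℝ)..1, t ^ s * (1 - t) ^ (n + 1)
          = ∫ t in (0:ℝ)..1, (t ^ s * (1 - t) ^ n - t ^ (s + 1) * (1 - t) ^ n) := by
            simp_rw [hsplit]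
        _ = (∫ t in (0:ℝ)..1, t ^ s * (1 - t) ^ n)
            - ∫ t in (0:ℝ)..1, t ^ (s + 1) * (1 - t) ^ n :=
            intervalIntegral.integral_sub h1 h2
        _ = (s.factorial * n.factorial : ℝ) / (s + n + 1).factorial
            - ((s + 1).factorial * n.factorial : ℝ) / (s + 1 + n + 1).factorial := by
            rw [ih s, ih (s + 1)]
        _ = (s.factorial * (n + 1).factorial : ℝ) / (s + (n + 1) + 1).factorial := by
            have e1 : s + 1 + n + 1 = (s + n + 1) + 1 := by ring
            have e2 : s + (n + 1) + 1 = (s + n + 1) + 1 := by ring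
            rw [e1, e2, Nat.factorial_succ (s + n + 1), Nat.factorial_succ s, Nat.factorial_succ n]
            have hpos : (0:ℝ) < ((s + n + 1).factorial : ℝ) := by positivity
            push_cast
            field_simp
            ring

theorem stmt_7 (N : ℕ) (U : Finset (Fin N) → ℝ) (i : Fin N) :
    (∑ S ∈ (Finset.univ.erase i).powerset,
        ((S.card.factorial * (N - 1 - S.card).factorial : ℝ) / N.factorial) *
          (U (insert i S) - U S)) =
      ∫ t in (0 : ℝ)..1,
        ∑ S ∈ (Finset.univ.erase i).powerset,
          t ^ S.card * (1 - t) ^ (N - 1 - S.card) * (U (insert i S) - U S) := by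
  rw [intervalIntegral.integral_finset_sum]
  · refine Finset.sum_congr rfl fun S hS => ?_
    have hNpos : 0 < N := i.pos
    have hcard : S.card ≤ N - 1 := by
      have := Finset.card_le_card (Finset.mem_powerset.mp hS)
      simpa [Finset.card_erase_of_mem, Finset.card_univ] using this
    have hN : S.card + (N - 1 - S.card) + 1 = N := by omega
    have : (∫ t in (0:ℝ)..1, t ^ S.card * (1 - t) ^ (N - 1 - S.card))
        = (S.card.factorial * (N - 1 - S.card).factorial : ℝ) / N.factorial := by
      rw [beta_nat, hN]
    rw [← this, ← intervalIntegral.integral_mul_const]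
  · intro S hS
    exact (by fun_prop : Continuous fun t : ℝ =>
      t ^ S.card * (1 - t) ^ (N - 1 - S.card) * (U (insert i S) - U S)).intervalIntegrable 0 1
end

section
/- Let N > 3 and let φ : ℝ^{2^N} → ℝ^N be any linear map on the space of games U : 2^[N] → ℝ. Then there exist two distinct subsets S₁, S₂ ⊆ [N] with S₁ ≠ [N]\S₂ and a game U with φ(U) = 0, D_U(S₁) ≠ 0, D_U(S₂) ≠ 0, and sign(D_U(S₁)) ≠ sign(D_U(S₂)), where D_U(S) = (U(S) − U([N]\S))/2. -/
open Finset

theorem stmt_16 (N : ℕ) (hN : 3 < N)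
    (φ : (Finset (Fin N) → ℝ) →ₗ[ℝ] (Fin N → ℝ)) :
    ∃ S₁ S₂ : Finset (Fin N), S₁ ≠ S₂ ∧ S₁ ≠ S₂ᶜ ∧
      ∃ U : Finset (Fin N) → ℝ, φ U = 0 ∧
        (U S₁ - U S₁ᶜ) / 2 ≠ 0 ∧ (U S₂ - U S₂ᶜ) / 2 ≠ 0 ∧
        Real.sign ((U S₁ - U S₁ᶜ) / 2) ≠ Real.sign ((U S₂ - U S₂ᶜ) / 2) := by
  haveI : NeZero N := ⟨by omega⟩
  set z : Fin N := 0 with hz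
  -- representatives: subsets containing z
  -- the "making-a-game-from-coefficients" linear map
  let L' : ({S : Finset (Fin N) // z ∈ S} → ℝ) →ₗ[ℝ] (Finset (Fin N) → ℝ) :=
    { toFun := fun c A =>
        if h : z ∈ A then c ⟨A, h⟩ else - c ⟨Aᶜ, by simp [Finset.mem_compl, h]⟩
      map_add' := by
        intro c d; funext A; by_cases h : z ∈ A <;> simp [h] <;> ring
      map_smul' := by
        intro r c; funext A; by_cases h : z ∈ A <;> simp [h] <;> ring }
  have hL'S : ∀ (c) (S : {S : Finset (Fin N) // z ∈ S}), L' c S.1 = c S := by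
    intro c S
    simp only [L', LinearMap.coe_mk, AddHom.coe_mk]
    exact dif_pos S.2
  have hL'Sc : ∀ (c) (S : {S : Finset (Fin N) // z ∈ S}), L' c (S.1ᶜ) = - c S := by
    intro c S
    have h : ¬ z ∈ (S.1ᶜ) := by simp [Finset.mem_compl, S.2]
    simp only [L', LinearMap.coe_mk, AddHom.coe_mk, dif_neg h]
    congr 1
    exact congrArg c (Subtype.ext (compl_compl S.1))
  -- cardinality of representatives
  have hcard : Fintype.card {S : Finset (Fin N) // z ∈ S} = 2 ^ (N - 1) := by
    have e : {S : Finset (Fin N) // z ∈ S} ≃ {S : Finset (Fin N) // ¬ z ∈ S} :=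
      { toFun := fun S => ⟨S.1ᶜ, by simp [Finset.mem_compl, S.2]⟩
        invFun := fun S => ⟨S.1ᶜ, by simp [Finset.mem_compl, S.2]⟩
        left_inv := fun S => Subtype.ext (compl_compl S.1)
        right_inv := fun S => Subtype.ext (compl_compl S.1) }
    have h1 : Fintype.card {S : Finset (Fin N) // ¬ z ∈ S}
        = Fintype.card (Finset (Fin N)) - Fintype.card {S : Finset (Fin N) // z ∈ S} :=
      Fintype.card_subtype_compl _
    have h2 : Fintype.card (Finset (Fin N)) = 2 ^ N := by
      rw [Fintype.card_finset, Fintype.card_fin]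
    have h3 := Fintype.card_congr e
    have h4 : 2 ^ N = 2 * 2 ^ (N - 1) := by
      conv_lhs => rw [show N = (N - 1) + 1 by omega]
      ring
    have h5 : Fintype.card {S : Finset (Fin N) // z ∈ S} ≤ Fintype.card (Finset (Fin N)) :=
      Fintype.card_subtype_le _
    omega
  -- rank-nullity for φ ∘ L'
  set L := φ.comp L' with hL
  have hker : 1 < Module.finrank ℝ (LinearMap.ker L) := by
    have h1 := LinearMap.finrank_range_add_finrank_ker L
    have h2 : Module.finrank ℝ ({S : Finset (Fin N) // z ∈ S} → ℝ) = 2 ^ (N - 1) := by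
      rw [Module.finrank_fintype_fun_eq_card, hcard]
    have h3 : Module.finrank ℝ (LinearMap.range L) ≤ N := by
      have := Submodule.finrank_le (LinearMap.range L)
      rwa [Module.finrank_fintype_fun_eq_card, Fintype.card_fin] at this
    have h4 : N + 2 ≤ 2 ^ (N - 1) := by
      have h6 : ∀ m : ℕ, 3 ≤ m → m + 3 ≤ 2 ^ m := by
        intro m
        induction m with
        | zero => omega
        | succ k ih =>
          intro hm
          rcases Nat.lt_or_ge k 3 with hk | hk
          · interval_cases k <;> simp_all
          · have hik := ih hk
            have : 2 ^ (k + 1) = 2 ^ k + 2 ^ k := by ring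
            omega
      have := h6 (N - 1) (by omega)
      omega
    omega
  -- find an element of the kernel with two nonzero coordinates
  have key : ∃ c ∈ LinearMap.ker L, ∃ S T : {S : Finset (Fin N) // z ∈ S},
      S ≠ T ∧ c S ≠ 0 ∧ c T ≠ 0 := by
    by_contra hcon
    push_neg at hcon
    -- every kernel element is supported on at most one coordinate
    have hsupp : ∀ c ∈ LinearMap.ker L, ∀ S T, c S ≠ 0 → c T ≠ 0 → S = T := by
      intro c hc S T hS hT
      by_contra hne
      exact hT (hcon c hc S T hne hS)
    haveI : Nontrivial (LinearMap.ker L) :=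
      Module.nontrivial_of_finrank_pos (by omega : 0 < Module.finrank ℝ (LinearMap.ker L))
    obtain ⟨u, hu⟩ := exists_ne (0 : LinearMap.ker L)
    obtain ⟨v, huv⟩ := exists_linearIndependent_pair_of_one_lt_finrank hker hu
    -- u is supported at exactly one point S
    have hune : (u : {S : Finset (Fin N) // z ∈ S} → ℝ) ≠ 0 := by
      simpa [Submodule.coe_eq_zero] using hu
    obtain ⟨S, hS⟩ : ∃ S, (u : {S : Finset (Fin N) // z ∈ S} → ℝ) S ≠ 0 := by
      by_contra h; push_neg at h; exact hune (funext h)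
    have hvne : (v : {S : Finset (Fin N) // z ∈ S} → ℝ) ≠ 0 := by
      intro h
      have hv0 : v = 0 := Subtype.ext h
      have := huv.ne_zero 1
      simp [hv0] at this
    obtain ⟨T, hT⟩ : ∃ T, (v : {S : Finset (Fin N) // z ∈ S} → ℝ) T ≠ 0 := by
      by_contra h; push_neg at h; exact hvne (funext h)
    by_cases hST : S = T
    · -- then u, v proportional: (v S) • u - (u S) • v = 0
      subst hST
      have hdep : (v : _ → ℝ) S • u + (- ((u : _ → ℝ) S)) • v = 0 := by
        apply Subtype.ext
        funext W
        by_cases hW : W = S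
        · subst hW; push_cast; simp; ring
        · have hu0 : (u : _ → ℝ) W = 0 := by
            by_contra h
            exact hW (hsupp u u.2 W S h hS)
          have hv0 : (v : _ → ℝ) W = 0 := by
            by_contra h
            exact hW (hsupp v v.2 W S h hT)
          push_cast
          simp [hu0, hv0]
      have := (LinearIndependent.pair_iff.mp huv _ _ hdep).1
      exact hT this
    · -- combine u + v
      have hvS : (v : _ → ℝ) S = 0 := by
        by_contra h
        exact hST (hsupp v v.2 S T h hT)
      have huT : (u : _ → ℝ) T = 0 := by
        by_contra h
        exact hST (hsupp u u.2 S T hS h)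
      have h1 : (↑(u + v) : _ → ℝ) S ≠ 0 := by push_cast; simp [hvS, hS]
      have h2 : (↑(u + v) : _ → ℝ) T ≠ 0 := by push_cast; simp [huT, hT]
      exact h2 (hcon ↑(u + v) (u + v).2 S T hST h1)
  obtain ⟨c, hc, S, T, hST, hcS, hcT⟩ := key
  have hφ : φ (L' c) = 0 := hc
  set U := L' c with hU
  have hDS : (U S.1 - U (S.1ᶜ)) / 2 = c S := by
    rw [hU, hL'S, hL'Sc]; ring
  have hDT : (U T.1 - U (T.1ᶜ)) / 2 = c T := by
    rw [hU, hL'S, hL'Sc]; ring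
  have hDTc : (U (T.1ᶜ) - U ((T.1ᶜ)ᶜ)) / 2 = - c T := by
    rw [hU, hL'Sc, compl_compl, hL'S]; ring
  have hzS : z ∈ S.1 := S.2
  have hzT : z ∈ T.1 := T.2
  by_cases hsgn : Real.sign (c S) = Real.sign (c T)
  · refine ⟨S.1, T.1ᶜ, ?_, ?_, U, hφ, ?_, ?_, ?_⟩
    · intro h; rw [h] at hzS; simp [Finset.mem_compl] at hzS; exact hzS hzT
    · rw [compl_compl]; exact fun h => hST (Subtype.ext h)
    · rw [hDS]; exact hcS
    · rw [hDTc]; simpa using hcT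
    · rw [hDS, hDTc, Real.sign_neg, ← hsgn]
      intro h
      have : Real.sign (c S) = 0 := by linarith
      exact hcS (Real.sign_eq_zero_iff.mp this)
  · refine ⟨S.1, T.1, ?_, ?_, U, hφ, ?_, ?_, ?_⟩
    · exact fun h => hST (Subtype.ext h)
    · intro h; rw [h] at hzS; simp [Finset.mem_compl] at hzS; exact hzS hzT
    · rw [hDS]; exact hcS
    · rw [hDT]; exact hcT
    · rw [hDS, hDT]; exact hsgn
end
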